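/- Let Σ ⊇ {0,1} be a finite alphabet, let S ⊆ Σ^ω, and suppose there exists α ∈ S such that for every δ > 0 there is a sequence β ∈ S that differs from α in infinitely many positions and satisfies d_H(α, β) ≤ δ. Then no compact decoder-only Transformer over Σ eventually learns every sequence in S. -/

import Mathlib

open Finset Filter

open Classical in
/-- Relative Hamming distance between two finite sequences. -/
noncomputable def relHamming {A : Type*} {n : ℕ} (α β : Fin n → A) : ℝ :=
  ((Finset.univ.filter (fun i => α i ≠ β i)).card : ℝ) / n

/-- Relative Hamming distance between two infinite sequences (1-indexed:
position `n ≥ 1` of the sequence `α : ℕ → A` is `α n`). -/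
noncomputable def relHammingInf {A : Type*} (α β : ℕ → A) : ℝ :=
  Filter.liminf
    (fun n : ℕ => relHamming (fun i : Fin n => α (i.val + 1)) (fun i : Fin n => β (i.val + 1)))
    Filter.atTop

/-- A `d`-dimensional decoder-only attention layer. -/
structure AttentionLayer (d : ℕ) where
  p : ℕ → ℕ → (Fin d → ℝ)
  val : (Fin d → ℝ) → (Fin d → ℝ)
  w : (Fin d → ℝ) → (Fin d → ℝ) → (Fin d → ℝ) → ℝ
  F : (Fin d → ℝ) → (Fin d → ℝ) → (Fin d → ℝ)
  w_pos : ∀ x y z, 0 < w x y z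
  val_cont : Continuous val
  w_cont : Continuous fun t : (Fin d → ℝ) × (Fin d → ℝ) × (Fin d → ℝ) => w t.1 t.2.1 t.2.2
  F_cont : Continuous fun t : (Fin d → ℝ) × (Fin d → ℝ) => F t.1 t.2

/-- A positional encoding is compact if its range is contained in a compact set. -/
def AttentionLayer.CompactPE {d : ℕ} (L : AttentionLayer d) : Prop :=
  ∃ K : Set (Fin d → ℝ), IsCompact K ∧ ∀ i j : ℕ, L.p i j ∈ K

/-- The `j`-th attention vector computed by the layer on input `x`. -/
noncomputable def AttentionLayer.attn {d : ℕ} (L : AttentionLayer d) {n : ℕ}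
    (x : Fin n → (Fin d → ℝ)) (j : Fin n) : Fin d → ℝ :=
  (∑ i ∈ Finset.Iic j, L.w (x i) (x j) (L.p i.val j.val))⁻¹ •
    ∑ i ∈ Finset.Iic j, L.w (x i) (x j) (L.p i.val j.val) • L.val (x i)

/-- The output sequence of the layer on input `x`. -/
noncomputable def AttentionLayer.apply {d : ℕ} (L : AttentionLayer d) {n : ℕ}
    (x : Fin n → (Fin d → ℝ)) : Fin n → (Fin d → ℝ) :=
  fun j => L.F (L.attn x j) (x j)

/-- `sim(x, x̂)`: the minimal `δ ≥ 0` such that `‖x_i − x̂_i‖ ≤ δ` for at least `(1−δ)n`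
indices `i`. -/
noncomputable def simDist {d n : ℕ} (x y : Fin n → (Fin d → ℝ)) : ℝ :=
  sInf {δ : ℝ | 0 ≤ δ ∧
    (1 - δ) * n ≤ ((Finset.univ.filter (fun i => ‖x i - y i‖ ≤ δ)).card : ℝ)}

/-- Sequential application of a list of attention layers. -/
noncomputable def applyLayers {d : ℕ} (Ls : List (AttentionLayer d)) {n : ℕ}
    (x : Fin n → (Fin d → ℝ)) : Fin n → (Fin d → ℝ) :=
  Ls.foldl (fun v L => L.apply v) x

/-- A decoder-only Transformer over a finite alphabet `A`. -/
structure Transformer (A : Type*) [Fintype A] (d : ℕ) where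
  embed : A → ℕ → (Fin d → ℝ)
  layers : List (AttentionLayer d)
  proj : (Fin d → ℝ) → (A → ℝ)
  proj_cont : Continuous proj
  proj_nonneg : ∀ y a, 0 ≤ proj y a
  proj_sum : ∀ y, ∑ a, proj y a = 1

/-- The output probability distribution (as a vector in `ℝ^A`) of the Transformer on a
nonempty input sequence. -/
noncomputable def Transformer.eval {A : Type*} [Fintype A] {d : ℕ} (T : Transformer A d)
    {n : ℕ} (α : Fin (n + 1) → A) : A → ℝ :=
  T.proj (applyLayers T.layers (fun j => T.embed (α j) j.val) (Fin.last n))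

/-- A Transformer is compact if its input embedding has range in a compact set and all of
its layers have compact positional encoding. -/
def Transformer.IsCompactT {A : Type*} [Fintype A] {d : ℕ} (T : Transformer A d) : Prop :=
  (∃ K : Set (Fin d → ℝ), IsCompact K ∧ ∀ (a : A) (i : ℕ), T.embed a i ∈ K) ∧
  ∀ L ∈ T.layers, L.CompactPE

/-- `T` eventually learns the infinite sequence `α` (1-indexed: position `n ≥ 1` is `α n`). -/
def EventuallyLearns {A : Type*} [Fintype A] {d : ℕ} (T : Transformer A d) (α : ℕ → A) :
    Prop :=
  ∃ ε : ℝ, 0 < ε ∧ ∃ n₀ : ℕ, ∀ n ≥ n₀, ∀ σ : A, σ ≠ α (n + 2) →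
    T.eval (fun i : Fin (n + 1) => α (i.val + 1)) σ + ε ≤
      T.eval (fun i : Fin (n + 1) => α (i.val + 1)) (α (n + 2))

/-! A compact Transformer is robust to sparse perturbations of its input. On the compact set
where its activations live, attention weights are bounded away from `0` and `∞`, so each
attention vector is a center of mass that moves by `O(δ)` when a `δ`-fraction of the positions
is changed arbitrarily and the others only slightly; uniform continuity carries this through
all layers and the output map. Hence after two prefixes with the same last symbol and small
relative Hamming distance the predicted distributions are close. Now take `β ∈ S` with
`d_H(α, β)` small that differs from `α` infinitely often: there are infinitely many `m` with
`α_m = β_m`, `α_{m+1} ≠ β_{m+1}` and prefixes of length `m` at relative distance small (the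
last agreement before the first mismatch after a sparse prefix). A Transformer learning both
`α` and `β` would have to prefer `α_{m+1}` over `β_{m+1}` by a margin after one prefix, and the
opposite after the other: impossible with nearly equal predictions. -/

theorem norm_centerMass_le {ι E : Type*} [SeminormedAddCommGroup E] [NormedSpace ℝ E]
    {t : Finset ι} {w : ι → ℝ} {v : ι → E} {M : ℝ} (hw : ∀ i ∈ t, 0 ≤ w i)
    (hW : 0 < ∑ i ∈ t, w i) (hv : ∀ i ∈ t, ‖v i‖ ≤ M) : ‖t.centerMass w v‖ ≤ M := by
  simpa using (convex_closedBall (0 : E) M).centerMass_mem hw hW (by simpa using hv)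

theorem norm_centerMass_sub_centerMass_le {ι E : Type*} [SeminormedAddCommGroup E]
    [NormedSpace ℝ E] {t : Finset ι} {w w' : ι → ℝ} {v v' : ι → E} {M : ℝ} (ht : t.Nonempty)
    (hw : ∀ i ∈ t, 0 < w i) (hw' : ∀ i ∈ t, 0 < w' i) (hv' : ∀ i ∈ t, ‖v' i‖ ≤ M) :
    ‖t.centerMass w v - t.centerMass w' v'‖ ≤
      (∑ i ∈ t, (w i * ‖v i - v' i‖ + 2 * M * |w i - w' i|)) / ∑ i ∈ t, w i := by
  set W := ∑ i ∈ t, w i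
  set W' := ∑ i ∈ t, w' i
  set c' := t.centerMass w' v'
  have hW : 0 < W := sum_pos hw ht
  have hW' : 0 < W' := sum_pos hw' ht
  have hc' : ‖c'‖ ≤ M := norm_centerMass_le (fun i hi => (hw' i hi).le) hW' hv'
  -- Multiplying out by `W` splits the difference into a change of values and a change of weights.
  have hsplit : W • (t.centerMass w v - c') =
      ∑ i ∈ t, w i • (v i - v' i) + ∑ i ∈ t, (w i - w' i) • v' i - (W - W') • c' := by
    have hc : W • t.centerMass w v = ∑ i ∈ t, w i • v i := by
      simp [Finset.centerMass, W, smul_smul, hW.ne']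
    have hc'' : W' • c' = ∑ i ∈ t, w' i • v' i := by
      simp [c', Finset.centerMass, W', smul_smul, hW'.ne']
    simp only [smul_sub, sub_smul, sum_sub_distrib, hc, hc'']
    abel
  have hWW' : |W - W'| ≤ ∑ i ∈ t, |w i - w' i| := by
    rw [← sum_sub_distrib]; exact abs_sum_le_sum_abs _ _
  rw [le_div_iff₀ hW, mul_comm, ← Real.norm_of_nonneg hW.le, ← norm_smul, hsplit]
  calc _ ≤ ‖∑ i ∈ t, w i • (v i - v' i)‖ + ‖∑ i ∈ t, (w i - w' i) • v' i‖ + ‖(W - W') • c'‖ :=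
        norm_sub_le_of_le (norm_add_le _ _) le_rfl
    _ ≤ ∑ i ∈ t, w i * ‖v i - v' i‖ + ∑ i ∈ t, |w i - w' i| * M + (∑ i ∈ t, |w i - w' i|) * M := by
        gcongr
        · refine (norm_sum_le _ _).trans (sum_le_sum fun i hi => ?_)
          rw [norm_smul, Real.norm_of_nonneg (hw i hi).le]
        · refine (norm_sum_le _ _).trans (sum_le_sum fun i hi => ?_)
          rw [norm_smul, Real.norm_eq_abs]
          gcongr
          exact hv' i hi
        · rw [norm_smul, Real.norm_eq_abs]
          exact mul_le_mul hWW' hc' (norm_nonneg _) (sum_nonneg fun i _ => abs_nonneg _)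
    _ = _ := by rw [sum_add_distrib, ← mul_sum, ← sum_mul]; ring

theorem sum_le_mul_card_add_mul_card_filter {ι : Type*} {t : Finset ι} {f : ι → ℝ}
    {p : ι → Prop} [DecidablePred p] {a b : ℝ} (ha : 0 ≤ a) (hgood : ∀ i ∈ t, ¬ p i → f i ≤ a)
    (hbad : ∀ i ∈ t, f i ≤ b) : ∑ i ∈ t, f i ≤ a * #t + b * #{i ∈ t | p i} := by
  rw [← sum_filter_add_sum_filter_not t p, add_comm]
  have hgood' := sum_le_card_nsmul {i ∈ t | ¬ p i} f a fun i hi =>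
    hgood i (mem_filter.1 hi).1 (mem_filter.1 hi).2
  have hbad' := sum_le_card_nsmul {i ∈ t | p i} f b fun i hi => hbad i (mem_filter.1 hi).1
  have hcard : (#{i ∈ t | ¬ p i} : ℝ) ≤ #t := by exact_mod_cast card_filter_le t _
  simp only [nsmul_eq_mul] at hgood' hbad'
  linarith [mul_le_mul_of_nonneg_right hcard ha]

theorem norm_centerMass_sub_centerMass_le_of_card_filter_le {ι E : Type*}
    [SeminormedAddCommGroup E] [NormedSpace ℝ E] {t : Finset ι} {w w' : ι → ℝ} {v v' : ι → E}
    {a b M η : ℝ} (p : ι → Prop) [DecidablePred p] (ht : t.Nonempty) (ha : 0 < a)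
    (hw : ∀ i ∈ t, a ≤ w i ∧ w i ≤ b) (hw' : ∀ i ∈ t, a ≤ w' i ∧ w' i ≤ b)
    (hv : ∀ i ∈ t, ‖v i‖ ≤ M) (hv' : ∀ i ∈ t, ‖v' i‖ ≤ M)
    (hgood : ∀ i ∈ t, ¬ p i → ‖v i - v' i‖ ≤ η ∧ |w i - w' i| ≤ η)
    (hbad : (#{i ∈ t | p i} : ℝ) ≤ η * #t) :
    ‖t.centerMass w v - t.centerMass w' v'‖ ≤ (b + 2 * M + 4 * M * b) / a * η := by
  obtain ⟨i₀, hi₀⟩ := ht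
  have hb : 0 < b := (ha.trans_le (hw i₀ hi₀).1).trans_le (hw i₀ hi₀).2
  have hM : 0 ≤ M := (norm_nonneg _).trans (hv i₀ hi₀)
  have ht : (0 : ℝ) < #t := by exact_mod_cast card_pos.2 ⟨i₀, hi₀⟩
  have hη : 0 ≤ η := nonneg_of_mul_nonneg_left ((Nat.cast_nonneg _).trans hbad) ht
  have hwpos : ∀ i ∈ t, 0 < w i := fun i hi => ha.trans_le (hw i hi).1
  have hgood' : ∀ i ∈ t, ¬ p i →
      w i * ‖v i - v' i‖ + 2 * M * |w i - w' i| ≤ η * (b + 2 * M) := by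
    intro i hi hpi
    have := mul_le_mul (hw i hi).2 (hgood i hi hpi).1 (norm_nonneg _) hb.le
    nlinarith [(hgood i hi hpi).2]
  have hbad' : ∀ i ∈ t, w i * ‖v i - v' i‖ + 2 * M * |w i - w' i| ≤ 4 * M * b := by
    intro i hi
    have hvi : ‖v i - v' i‖ ≤ 2 * M := (norm_sub_le _ _).trans (by linarith [hv i hi, hv' i hi])
    have hwi : |w i - w' i| ≤ b := abs_sub_le_of_nonneg_of_le (hwpos i hi).le (hw i hi).2
      (ha.trans_le (hw' i hi).1).le (hw' i hi).2
    have := mul_le_mul (hw i hi).2 hvi (norm_nonneg _) hb.le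
    nlinarith
  have hsum := sum_le_mul_card_add_mul_card_filter (by positivity) hgood' hbad'
  have hW : #t • a ≤ ∑ i ∈ t, w i := card_nsmul_le_sum t w a fun i hi => (hw i hi).1
  rw [nsmul_eq_mul] at hW
  refine (norm_centerMass_sub_centerMass_le ⟨i₀, hi₀⟩ hwpos
    (fun i hi => ha.trans_le (hw' i hi).1) hv').trans ?_
  rw [div_le_iff₀ (sum_pos hwpos ⟨i₀, hi₀⟩)]
  calc _ ≤ η * (b + 2 * M) * #t + 4 * M * b * (η * #t) := hsum.trans (by gcongr)
    _ = (b + 2 * M + 4 * M * b) / a * η * (#t * a) := by field_simp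
    _ ≤ _ := by gcongr

theorem card_filter_val_add_one_le (n : ℕ) {r : ℝ} (hr : 0 ≤ r) :
    (#{j : Fin n | (j : ℝ) + 1 ≤ r} : ℝ) ≤ r := by
  have hmaps : ∀ j ∈ ({j : Fin n | (j : ℝ) + 1 ≤ r} : Finset (Fin n)), (j : ℕ) ∈ range ⌊r⌋₊ :=
    fun j hj => mem_range.2 (Nat.le_floor (by exact_mod_cast (mem_filter.1 hj).2))
  have hcard := card_le_card_of_injOn Fin.val hmaps Fin.val_injective.injOn
  rw [card_range] at hcard
  exact (Nat.cast_le.2 hcard).trans (Nat.floor_le hr)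

section Robustness

variable {E F : Type*} [PseudoMetricSpace E] [PseudoMetricSpace F]

/-- The paper's condition `sim(x, y) ≤ δ` (cf. `simDist`). -/
def AlmostClose {n : ℕ} (δ : ℝ) (x y : Fin n → E) : Prop :=
  (#{i | δ < dist (x i) (y i)} : ℝ) ≤ δ * n

def IsRobustOn (K : Set E) (f : ∀ n, (Fin (n + 1) → E) → Fin (n + 1) → F) : Prop :=
  ∀ ε > 0, ∃ δ > 0, ∀ n (x y : Fin (n + 1) → E), (∀ i, x i ∈ K) → (∀ i, y i ∈ K) →
    AlmostClose δ x y → dist (x (Fin.last n)) (y (Fin.last n)) ≤ δ →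
    AlmostClose ε (f n x) (f n y) ∧ dist (f n x (Fin.last n)) (f n y (Fin.last n)) ≤ ε

theorem isRobustOn_id (K : Set E) : IsRobustOn K fun _ => (id : (Fin _ → E) → _) :=
  fun ε hε => ⟨ε, hε, fun _ _ _ _ _ hxy hlast => ⟨hxy, hlast⟩⟩

theorem IsRobustOn.comp {G : Type*} [PseudoMetricSpace G] {K : Set E} {K' : Set F}
    {f : ∀ n, (Fin (n + 1) → E) → Fin (n + 1) → F} {g : ∀ n, (Fin (n + 1) → F) → Fin (n + 1) → G}
    (hg : IsRobustOn K' g) (hf : IsRobustOn K f)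
    (hfK : ∀ n (x : Fin (n + 1) → E), (∀ i, x i ∈ K) → ∀ i, f n x i ∈ K') :
    IsRobustOn K fun n => g n ∘ f n := by
  intro ε hε
  obtain ⟨η, hη, hgη⟩ := hg ε hε
  obtain ⟨δ, hδ, hfδ⟩ := hf η hη
  refine ⟨δ, hδ, fun n x y hx hy hxy hlast => ?_⟩
  obtain ⟨hfxy, hflast⟩ := hfδ n x y hx hy hxy hlast
  exact hgη n _ _ (hfK n x hx) (hfK n y hy) hfxy hflast

end Robustness

namespace AttentionLayer

variable {d : ℕ} (L : AttentionLayer d) {K : Set (Fin d → ℝ)}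

theorem norm_attn_le {n : ℕ} {x : Fin n → Fin d → ℝ} {M : ℝ} (hx : ∀ i, ‖L.val (x i)‖ ≤ M)
    (j : Fin n) : ‖L.attn x j‖ ≤ M :=
  norm_centerMass_le (fun _ _ => (L.w_pos _ _ _).le)
    (sum_pos (fun _ _ => L.w_pos _ _ _) ⟨j, mem_Iic.2 le_rfl⟩) (fun i _ => hx i)

theorem exists_norm_val_le (hK : IsCompact K) : ∃ M > 0, ∀ u ∈ K, ‖L.val u‖ ≤ M := by
  simpa using (hK.image L.val_cont).isBounded.exists_pos_norm_le

theorem exists_isCompact_apply_mem (hK : IsCompact K) :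
    ∃ K', IsCompact K' ∧ ∀ n (x : Fin n → Fin d → ℝ), (∀ i, x i ∈ K) → ∀ j, L.apply x j ∈ K' := by
  obtain ⟨M, -, hM⟩ := L.exists_norm_val_le hK
  refine ⟨(fun t => L.F t.1 t.2) '' (Metric.closedBall 0 M ×ˢ K),
    ((isCompact_closedBall _ _).prod hK).image L.F_cont,
    fun n x hx j => ⟨(L.attn x j, x j), ⟨?_, hx j⟩, rfl⟩⟩
  simpa using L.norm_attn_le (fun i => hM _ (hx i)) j

theorem exists_weight_bounds (hL : L.CompactPE) (hK : IsCompact K) :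
    ∃ a b, 0 < a ∧ ∀ u ∈ K, ∀ u' ∈ K, ∀ i j,
      a ≤ L.w u u' (L.p i j) ∧ L.w u u' (L.p i j) ≤ b := by
  obtain ⟨P, hP, hpP⟩ := hL
  have hC : IsCompact (K ×ˢ K ×ˢ P) := hK.prod (hK.prod hP)
  obtain ⟨a, ha, hwa⟩ := hC.exists_forall_le' L.w_cont.continuousOn fun _ _ => L.w_pos _ _ _
  obtain ⟨b, hwb⟩ := hC.exists_bound_of_continuousOn L.w_cont.continuousOn
  refine ⟨a, b, ha, fun u hu u' hu' i j => ⟨?_, ?_⟩⟩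
  · exact hwa (u, u', L.p i j) ⟨hu, hu', hpP i j⟩
  · exact (le_abs_self _).trans (hwb (u, u', L.p i j) ⟨hu, hu', hpP i j⟩)

theorem exists_dist_weight_le (hL : L.CompactPE) (hK : IsCompact K) :
    ∀ η > 0, ∃ δ > 0, ∀ u ∈ K, ∀ u' ∈ K, ∀ v ∈ K, ∀ v' ∈ K, dist u v ≤ δ → dist u' v' ≤ δ →
      ∀ i j, dist (L.w u u' (L.p i j)) (L.w v v' (L.p i j)) ≤ η := by
  obtain ⟨P, hP, hpP⟩ := hL
  intro η hη
  obtain ⟨δ, hδ, hw⟩ := Metric.uniformContinuousOn_iff_le.1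
    ((hK.prod (hK.prod hP)).uniformContinuousOn_of_continuous L.w_cont.continuousOn) η hη
  refine ⟨δ, hδ, fun u hu u' hu' v hv v' hv' huv hu'v' i j => hw (u, u', L.p i j)
    ⟨hu, hu', hpP i j⟩ (v, v', L.p i j) ⟨hv, hv', hpP i j⟩ ?_⟩
  simp [Prod.dist_eq, huv, hu'v']

theorem exists_dist_attn_le (hL : L.CompactPE) (hK : IsCompact K) :
    ∀ ε > 0, ∃ δ > 0, ∀ n (x y : Fin n → Fin d → ℝ), (∀ i, x i ∈ K) → (∀ i, y i ∈ K) → ∀ j,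
      dist (x j) (y j) ≤ δ → (#{i ∈ Iic j | δ < dist (x i) (y i)} : ℝ) ≤ δ * (j + 1) →
      dist (L.attn x j) (L.attn y j) ≤ ε := by
  intro ε hε
  obtain ⟨a, b, ha, hab⟩ := L.exists_weight_bounds hL hK
  obtain ⟨M, -, hval⟩ := L.exists_norm_val_le hK
  obtain ⟨η, hη, hηε⟩ := exists_pos_mul_lt hε ((b + 2 * M + 4 * M * b) / a)
  obtain ⟨δv, hδv, hv⟩ := Metric.uniformContinuousOn_iff_le.1
    (hK.uniformContinuousOn_of_continuous L.val_cont.continuousOn) η hη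
  obtain ⟨δw, hδw, hw⟩ := L.exists_dist_weight_le hL hK η hη
  set δ := min η (min δv δw)
  refine ⟨δ, by positivity, fun n x y hx hy j hj hbad => ?_⟩
  rw [dist_eq_norm]
  refine (norm_centerMass_sub_centerMass_le_of_card_filter_le (fun i => δ < dist (x i) (y i))
    ⟨j, mem_Iic.2 le_rfl⟩ ha (fun i _ => hab _ (hx i) _ (hx j) i j)
    (fun i _ => hab _ (hy i) _ (hy j) i j) (fun i _ => hval _ (hx i)) (fun i _ => hval _ (hy i))
    (fun i _ hi => ⟨?_, ?_⟩) ?_).trans hηε.le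
  · rw [← dist_eq_norm]
    exact hv _ (hx i) _ (hy i) ((not_lt.1 hi).trans (by simp [δ]))
  · rw [← Real.dist_eq]
    exact hw _ (hx i) _ (hx j) _ (hy i) _ (hy j) ((not_lt.1 hi).trans (by simp [δ]))
      (hj.trans (by simp [δ])) i j
  · simpa using hbad.trans (by gcongr; exact min_le_left _ _)

theorem exists_dist_apply_le (hL : L.CompactPE) (hK : IsCompact K) :
    ∀ ε > 0, ∃ δ > 0, ∀ n (x y : Fin n → Fin d → ℝ), (∀ i, x i ∈ K) → (∀ i, y i ∈ K) → ∀ j,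
      dist (x j) (y j) ≤ δ → (#{i ∈ Iic j | δ < dist (x i) (y i)} : ℝ) ≤ δ * (j + 1) →
      dist (L.apply x j) (L.apply y j) ≤ ε := by
  intro ε hε
  obtain ⟨M, -, hval⟩ := L.exists_norm_val_le hK
  obtain ⟨δF, hδF, hF⟩ := Metric.uniformContinuousOn_iff_le.1
    (((isCompact_closedBall (0 : Fin d → ℝ) M).prod hK).uniformContinuousOn_of_continuous
      L.F_cont.continuousOn) ε hε
  obtain ⟨δA, hδA, hA⟩ := L.exists_dist_attn_le hL hK δF hδF
  refine ⟨min δA δF, by positivity, fun n x y hx hy j hj hbad => ?_⟩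
  have hbadA : (#{i ∈ Iic j | δA < dist (x i) (y i)} : ℝ) ≤ δA * (j + 1) := by
    refine le_trans ?_ (hbad.trans (by gcongr; exact min_le_left _ _))
    exact_mod_cast card_le_card (monotone_filter_right _
      fun _ _ => (min_le_left _ _).trans_lt)
  have hmem (z : Fin n → Fin d → ℝ) (hz : ∀ i, z i ∈ K) :
      (L.attn z j, z j) ∈ Metric.closedBall 0 M ×ˢ K :=
    ⟨by simpa using L.norm_attn_le (fun i => hval _ (hz i)) j, hz j⟩
  refine hF _ (hmem x hx) _ (hmem y hy) (max_le ?_ ?_)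
  · exact hA n x y hx hy j (hj.trans (min_le_left _ _)) hbadA
  · exact hj.trans (min_le_right _ _)

theorem isRobustOn_apply (hL : L.CompactPE) (hK : IsCompact K) :
    IsRobustOn K fun n => L.apply (n := n + 1) := by
  intro ε hε
  obtain ⟨δL, hδL, happly⟩ := L.exists_dist_apply_le hL hK ε hε
  set δ := min δL (ε * δL / (1 + δL))
  have hδ : 0 < δ := by positivity
  refine ⟨δ, hδ, fun n x y hx hy hxy hlast => ?_⟩
  unfold AlmostClose at hxy ⊢
  push_cast at hxy ⊢
  -- If `δ (n + 1) ≤ δL (j + 1)`, the `δ`-far positions are few even within the prefix up to `j`.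
  have hgood : ∀ j, dist (x j) (y j) ≤ δ → δ * (n + 1) ≤ δL * (j + 1) →
      dist (L.apply x j) (L.apply y j) ≤ ε := by
    refine fun j hj hlate => happly _ x y hx hy j (hj.trans (min_le_left _ _)) ?_
    refine le_trans ?_ (hxy.trans hlate)
    exact_mod_cast card_le_card fun i hi => mem_filter.2
      ⟨mem_univ _, (min_le_left _ _).trans_lt (mem_filter.1 hi).2⟩
  refine ⟨?_, hgood _ hlast (by simp only [Fin.val_last]; gcongr; exact min_le_left _ _)⟩
  set r := δ * (n + 1) / δL
  have hsub : ({j | ε < dist (L.apply x j) (L.apply y j)} : Finset (Fin (n + 1))) ⊆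
      ({j | δ < dist (x j) (y j)} : Finset _) ∪ ({j : Fin (n + 1) | (j : ℝ) + 1 ≤ r} : Finset _) := by
    intro j hj
    simp only [mem_union, mem_filter, mem_univ, true_and] at hj ⊢
    by_contra! h
    rw [div_lt_iff₀ hδL] at h
    exact (hgood j h.1 (by linarith [h.2])).not_gt hj
  have hsmall := card_filter_val_add_one_le (n + 1) (r := r) (by positivity)
  have hδε : δ + δ / δL ≤ ε := by
    have : δ ≤ ε * δL / (1 + δL) := min_le_right _ _
    rw [le_div_iff₀ (by positivity)] at this
    rw [← le_sub_iff_add_le', div_le_iff₀ hδL]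
    nlinarith
  calc (#{j | ε < dist (L.apply x j) (L.apply y j)} : ℝ)
      ≤ #{j | δ < dist (x j) (y j)} + #{j : Fin (n + 1) | (j : ℝ) + 1 ≤ r} := by
        rw [← Nat.cast_add]
        exact Nat.cast_le.2 ((card_le_card hsub).trans (card_union_le _ _))
    _ ≤ δ * (n + 1) + r := add_le_add hxy hsmall
    _ = (δ + δ / δL) * (n + 1) := by ring
    _ ≤ ε * (n + 1) := by gcongr

end AttentionLayer

theorem exists_isCompact_applyLayers_mem {d : ℕ} (Ls : List (AttentionLayer d))
    {K : Set (Fin d → ℝ)} (hK : IsCompact K) :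
    ∃ K', IsCompact K' ∧
      ∀ n (x : Fin n → Fin d → ℝ), (∀ i, x i ∈ K) → ∀ j, applyLayers Ls x j ∈ K' := by
  induction Ls generalizing K with
  | nil => exact ⟨K, hK, fun _ _ hx => hx⟩
  | cons L Ls ih =>
    obtain ⟨K₁, hK₁, hL⟩ := L.exists_isCompact_apply_mem hK
    obtain ⟨K', hK', hLs⟩ := ih hK₁
    exact ⟨K', hK', fun n x hx => hLs n _ (hL n x hx)⟩

theorem isRobustOn_applyLayers {d : ℕ} {Ls : List (AttentionLayer d)}
    (hLs : ∀ L ∈ Ls, L.CompactPE) {K : Set (Fin d → ℝ)} (hK : IsCompact K) :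
    IsRobustOn K fun n => applyLayers Ls (n := n + 1) := by
  induction Ls generalizing K with
  | nil => exact isRobustOn_id K
  | cons L Ls ih =>
    obtain ⟨K₁, hK₁, hL⟩ := L.exists_isCompact_apply_mem hK
    exact (ih (fun L' hL' => hLs L' (List.mem_cons_of_mem _ hL')) hK₁).comp
      (L.isRobustOn_apply (hLs L List.mem_cons_self) hK) fun n x hx => hL _ x hx

theorem Transformer.IsCompactT.exists_eval_close {A : Type*} [Fintype A] {d : ℕ}
    {T : Transformer A d} (hT : T.IsCompactT) :
    ∀ ε > 0, ∃ δ > 0, ∀ n (α β : Fin (n + 1) → A), α (Fin.last n) = β (Fin.last n) →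
      relHamming α β ≤ δ → ∀ σ, |T.eval α σ - T.eval β σ| ≤ ε := by
  classical
  obtain ⟨⟨K, hK, hembed⟩, hLs⟩ := hT
  obtain ⟨K', hK', hmem⟩ := exists_isCompact_applyLayers_mem T.layers hK
  intro ε hε
  obtain ⟨η, hη, hproj⟩ := Metric.uniformContinuousOn_iff_le.1
    (hK'.uniformContinuousOn_of_continuous T.proj_cont.continuousOn) ε hε
  obtain ⟨δ, hδ, hrob⟩ := isRobustOn_applyLayers hLs hK η hη
  refine ⟨δ, hδ, fun n α β hlast hαβ σ => ?_⟩
  set x : Fin (n + 1) → Fin d → ℝ := fun j => T.embed (α j) j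
  set y : Fin (n + 1) → Fin d → ℝ := fun j => T.embed (β j) j
  have hxy : AlmostClose δ x y := by
    rw [relHamming, div_le_iff₀ (by positivity)] at hαβ
    refine le_trans ?_ hαβ
    refine Nat.cast_le.2 (card_le_card (monotone_filter_right _ fun i _ h heq => ?_))
    simp only [x, y, heq, dist_self] at h
    exact h.not_gt hδ
  have hlast' : dist (x (Fin.last n)) (y (Fin.last n)) ≤ δ := by simp [x, y, hlast, hδ.le]
  have hout := (hrob n x y (fun _ => hembed _ _) (fun _ => hembed _ _) hxy hlast').2
  rw [← Real.dist_eq]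
  exact (dist_le_pi_dist _ _ σ).trans
    (hproj _ (hmem _ x (fun _ => hembed _ _) _) _ (hmem _ y (fun _ => hembed _ _) _) hout)

theorem relHamming_le_one {A : Type*} {n : ℕ} (α β : Fin n → A) : relHamming α β ≤ 1 := by
  classical
  refine div_le_one_of_le₀ ?_ (Nat.cast_nonneg _)
  exact_mod_cast (card_filter_le _ _).trans (card_univ.trans (Fintype.card_fin n)).le

section Mismatches

variable {A : Type*} (α β : ℕ → A)

open Classical in
noncomputable def mismatches (n : ℕ) : Finset ℕ := {k ∈ Icc 1 n | α k ≠ β k}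

theorem mismatches_mono : Monotone (mismatches α β) := by
  classical
  exact fun _ _ h => monotone_filter_left _ (Icc_subset_Icc_right h)

theorem relHamming_prefix (n : ℕ) :
    relHamming (fun i : Fin n => α (i + 1)) (fun i => β (i + 1)) = #(mismatches α β n) / n := by
  classical
  rw [relHamming, mismatches]
  congr 2
  refine card_bij (fun i _ => i.val + 1) (fun i hi => ?_) (fun i _ j _ h => ?_) (fun k hk => ?_)
  · simp only [mem_filter, mem_univ, true_and, mem_Icc] at hi ⊢
    exact ⟨⟨by omega, by omega⟩, hi⟩
  · exact Fin.ext (by omega)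
  · simp only [mem_filter, mem_Icc] at hk
    exact ⟨⟨k - 1, by omega⟩, by simpa [Nat.sub_add_cancel hk.1.1] using hk.2,
      Nat.sub_add_cancel hk.1.1⟩

theorem frequently_relHamming_prefix_lt {c : ℝ} (h : relHammingInf α β < c) :
    ∃ᶠ n in atTop, relHamming (fun i : Fin n => α (i + 1)) (fun i => β (i + 1)) < c :=
  frequently_lt_of_liminf_lt
    (isBoundedUnder_of ⟨1, fun _ => relHamming_le_one _ _⟩).isCoboundedUnder_ge h

theorem exists_agree_le_card_mismatches {n : ℕ} (hn : #(mismatches α β n) < n) :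
    ∃ m ≤ n, α m = β m ∧ n ≤ m + #(mismatches α β n) := by
  classical
  obtain ⟨m, hm⟩ : ∃ m, Nat.findGreatest (fun k => α k = β k) n = m := ⟨_, rfl⟩
  have hsub : Ioc m n ⊆ mismatches α β n := fun k hk => by
    simp only [mismatches, mem_Ioc, mem_filter, mem_Icc] at hk ⊢
    exact ⟨⟨by omega, hk.2⟩, Nat.findGreatest_is_greatest (hm ▸ hk.1) hk.2⟩
  have hle : n - m ≤ #(mismatches α β n) := by simpa using card_le_card hsub
  exact ⟨m, hm ▸ Nat.findGreatest_le n, Nat.findGreatest_of_ne_zero hm (by omega), by omega⟩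

theorem exists_agree_succ_ne (hinf : {k | α k ≠ β k}.Infinite) {m : ℕ} (hm : α m = β m) :
    ∃ k ≥ m, α k = β k ∧ α (k + 1) ≠ β (k + 1) ∧ mismatches α β k = mismatches α β m := by
  classical
  have hex : ∃ p, m < p ∧ α p ≠ β p := by
    obtain ⟨p, hp, hmp⟩ := hinf.exists_gt m
    exact ⟨p, hmp, hp⟩
  obtain ⟨hmp, hp⟩ := Nat.find_spec hex
  have hagree : ∀ k, m < k → k < Nat.find hex → α k = β k := fun k h₁ h₂ => by
    by_contra h
    exact Nat.find_min hex h₂ ⟨h₁, h⟩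
  refine ⟨Nat.find hex - 1, by omega, ?_, by rwa [Nat.sub_add_cancel (by omega)], ?_⟩
  · rcases (Nat.le_sub_one_of_lt hmp).eq_or_lt with h | h
    · rwa [← h]
    · exact hagree _ h (by omega)
  · ext k
    simp only [mismatches, mem_filter, mem_Icc]
    refine ⟨fun hk => ⟨⟨hk.1.1, ?_⟩, hk.2⟩, fun hk => ⟨⟨hk.1.1, by omega⟩, hk.2⟩⟩
    by_contra h
    exact hk.2 (hagree k (by omega) (by omega))

theorem frequently_agree_succ_ne (hinf : {k | α k ≠ β k}.Infinite) {c : ℝ} (hc : c ≤ 1 / 2)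
    (h : relHammingInf α β < c) :
    ∃ᶠ m in atTop, α m = β m ∧ α (m + 1) ≠ β (m + 1) ∧
      relHamming (fun i : Fin m => α (i + 1)) (fun i => β (i + 1)) ≤ 2 * c := by
  rw [frequently_atTop]
  intro N
  obtain ⟨n, hn, hlt⟩ := frequently_atTop.1 (frequently_relHamming_prefix_lt α β h) (2 * N + 1)
  have hn' : (2 * N + 1 : ℝ) ≤ n := by exact_mod_cast hn
  rw [relHamming_prefix, div_lt_iff₀ (by linarith)] at hlt
  have hcn : c * n ≤ n / 2 := by nlinarith
  have hD : (#(mismatches α β n) : ℝ) < n := by linarith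
  obtain ⟨m₀, hm₀n, hm₀, hnm₀⟩ := exists_agree_le_card_mismatches α β (Nat.cast_lt.1 hD)
  obtain ⟨m, hm₀m, hm, hm1, hmis⟩ := exists_agree_succ_ne α β hinf hm₀
  have hDm : (#(mismatches α β m) : ℝ) ≤ #(mismatches α β n) := by
    exact_mod_cast hmis ▸ card_le_card (mismatches_mono α β hm₀n)
  have hnm : (n : ℝ) ≤ m + #(mismatches α β n) := by
    have : (m₀ : ℝ) ≤ m := by exact_mod_cast hm₀m
    have : (n : ℝ) ≤ m₀ + #(mismatches α β n) := by exact_mod_cast hnm₀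
    linarith
  have hNm : (N : ℝ) ≤ m := by linarith
  refine ⟨m, by exact_mod_cast hNm, hm, hm1, ?_⟩
  rw [relHamming_prefix, div_le_iff₀ (by linarith)]
  have hc0 : 0 ≤ c := by nlinarith [(Nat.cast_nonneg _ : (0 : ℝ) ≤ #(mismatches α β n))]
  nlinarith

end Mismatches

theorem no_transformer_learns_accumulating_family_general {A : Type*} [Fintype A]
    (S : Set (ℕ → A))
    (hS : ∃ α ∈ S, ∀ δ : ℝ, 0 < δ → ∃ β ∈ S,
      {n : ℕ | α n ≠ β n}.Infinite ∧ relHammingInf α β ≤ δ) :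
    ¬ ∃ (d : ℕ) (T : Transformer A d), T.IsCompactT ∧
      ∀ γ ∈ S, EventuallyLearns T γ := by
  rintro ⟨d, T, hT, hlearn⟩
  obtain ⟨α, hαS, hacc⟩ := hS
  obtain ⟨ε, hε, n₀, hα⟩ := hlearn α hαS
  obtain ⟨δ, hδ, hclose⟩ := hT.exists_eval_close (ε / 2) (half_pos hε)
  obtain ⟨δ₀, hδ₀, hδ₀δ, hδ₀_le⟩ : ∃ δ₀ > 0, δ₀ ≤ δ / 4 ∧ δ₀ ≤ 1 / 4 :=
    ⟨min (δ / 4) (1 / 4), by positivity, min_le_left _ _, min_le_right _ _⟩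
  obtain ⟨β, hβS, hinf, hαβ⟩ := hacc δ₀ hδ₀
  obtain ⟨ε', hε', n₁, hβ⟩ := hlearn β hβS
  obtain ⟨_ | n, ⟨hagree, hdiff, hdist⟩, hn⟩ :=
    ((frequently_agree_succ_ne α β hinf (c := 2 * δ₀) (by linarith) (by linarith)).and_eventually
      (eventually_gt_atTop (n₀ + n₁))).exists
  · omega
  have hσ := hclose n _ _ hagree (hdist.trans (by linarith))
  have h₁ := hα n (by omega) (β (n + 2)) (Ne.symm hdiff)
  have h₂ := hβ n (by omega) (α (n + 2)) hdiff
  linarith [abs_le.1 (hσ (α (n + 2))), abs_le.1 (hσ (β (n + 2)))]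

/-- If a set `S` of infinite sequences has a point `α ∈ S` such that arbitrarily close to
`α` in `d_H`-distance there is a sequence of `S` differing from `α` in infinitely many
positions, then no compact decoder-only Transformer eventually learns all of `S`. -/
theorem no_transformer_learns_accumulating_family {A : Type*} [Fintype A]
    (zero one : A) (h01 : zero ≠ one) (S : Set (ℕ → A))
    (hS : ∃ α ∈ S, ∀ δ : ℝ, 0 < δ → ∃ β ∈ S,
      {n : ℕ | α n ≠ β n}.Infinite ∧ relHammingInf α β ≤ δ) :
    ¬ ∃ (d : ℕ) (T : Transformer A d), T.IsCompactT ∧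
      ∀ γ ∈ S, EventuallyLearns T γ :=
  no_transformer_learns_accumulating_family_general S hS
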